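/- For n ≥ 2 and d = 4n+1, in S_d let α = (1 2)(3 4)⋯(2n−1 2n) and β = (1 2n+1)·(2 2n+2 3 2n+3 ⋯ 2n 4n 4n+1) (a transposition times a disjoint (2n+1)-cycle on the remaining points). Then the commutator [α, β] equals (1 2)(3 4)⋯(4n−1 4n), a product of 2n disjoint transpositions. -/

import Mathlib

open Equiv
open Fin.NatCast

/-!
Since `α` is a product of disjoint transpositions it is an involution,
so `[α, β] = α · βαβ⁻¹`, and `βαβ⁻¹ = ∏ₖ (β(2k) β(2k+1))`. On `0, …, 2n-1`
the permutation `β` is the shift `j ↦ 2n + j` (for `j = 0` through `γ`,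
otherwise through `δ`), so `βαβ⁻¹` is the product of the remaining
transpositions `(2n 2n+1) ⋯ (4n-2 4n-1)`.
-/

theorem Fin.natCast_inj_of_lt {d : ℕ} [NeZero d] {a b : ℕ} (ha : a < d) (hb : b < d) :
    (a : Fin d) = b ↔ a = b := by
  rw [Fin.ext_iff, Fin.val_cast_of_lt ha, Fin.val_cast_of_lt hb]

namespace List

theorem prod_inv_eq_self_of_pairwise_commute {G : Type*} [Group G] {l : List G}
    (hc : l.Pairwise Commute) (hl : ∀ g ∈ l, g⁻¹ = g) : l.prod⁻¹ = l.prod := by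
  rw [prod_inv_reverse, map_congr_left hl, map_id',
    (reverse_perm l).prod_eq' (pairwise_reverse.2 (hc.imp Commute.symm))]

theorem formPerm_apply_of_infix {α : Type*} [DecidableEq α] {l : List α} (hl : l.Nodup)
    {x y : α} (h : [x, y] <:+: l) : l.formPerm x = y := by
  obtain ⟨s, t, rfl⟩ := h
  simpa using formPerm_apply_lt_getElem _ hl s.length (by simp)

end List

section NatCast

variable {d : ℕ} [NeZero d] {l : List ℕ}

theorem List.Nodup.map_natCast (hl : l.Nodup) (hd : ∀ a ∈ l, a < d) :
    (l.map (Nat.cast : ℕ → Fin d)).Nodup :=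
  hl.map_on fun a ha b hb => (Fin.natCast_inj_of_lt (hd a ha) (hd b hb)).1

theorem formPerm_map_natCast_apply (hl : l.Nodup) (hd : ∀ a ∈ l, a < d) {x y : ℕ}
    (h : [x, y] <:+: l) : (l.map (Nat.cast : ℕ → Fin d)).formPerm x = y :=
  List.formPerm_apply_of_infix (hl.map_natCast hd) (h.map _)

theorem formPerm_map_natCast_apply_of_notMem (hd : ∀ a ∈ l, a < d) {x : ℕ} (hx : x < d)
    (h : x ∉ l) : (l.map (Nat.cast : ℕ → Fin d)).formPerm x = x := by
  refine List.formPerm_apply_of_notMem fun hmem => h ?_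
  obtain ⟨a, ha, hax⟩ := List.mem_map.1 hmem
  rwa [← (Fin.natCast_inj_of_lt (hd a ha) hx).1 hax]

end NatCast

section PairSwaps

variable (d : ℕ) [NeZero d]

def pairSwaps (m : ℕ) : Perm (Fin d) :=
  ((List.range m).map fun k => swap ((2 * k : ℕ) : Fin d) ((2 * k + 1 : ℕ) : Fin d)).prod

theorem pairSwaps_add (m m' : ℕ) :
    pairSwaps d (m + m') = pairSwaps d m *
      ((List.range m').map fun k =>
        swap ((2 * m + 2 * k : ℕ) : Fin d) ((2 * m + 2 * k + 1 : ℕ) : Fin d)).prod := by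
  simp only [pairSwaps, List.range_add, List.map_append, List.prod_append, List.map_map,
    Function.comp_def, mul_add]

theorem pairSwaps_inv {m : ℕ} (hm : 2 * m ≤ d) : (pairSwaps d m)⁻¹ = pairSwaps d m := by
  refine List.prod_inv_eq_self_of_pairwise_commute ?_ ?_
  · refine List.pairwise_map.2 (List.pairwise_lt_range.imp_of_mem fun {i j} hi hj hij => ?_)
    rw [List.mem_range] at hi hj
    refine (Perm.disjoint_swap_swap ?_).commute
    have hnodup : [2 * i, 2 * i + 1, 2 * j, 2 * j + 1].Nodup := by grind
    exact hnodup.map_natCast (by grind)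
  · simp only [List.mem_map]
    rintro _ ⟨k, -, rfl⟩
    exact swap_inv _ _

theorem conj_pairSwaps {σ : Perm (Fin d)} {m c : ℕ}
    (hσ : ∀ j < 2 * m, σ j = ((c + j : ℕ) : Fin d)) :
    σ * pairSwaps d m * σ⁻¹ =
      ((List.range m).map fun k =>
        swap ((c + 2 * k : ℕ) : Fin d) ((c + 2 * k + 1 : ℕ) : Fin d)).prod := by
  rw [pairSwaps, ← MulAut.conj_apply, map_list_prod, List.map_map]
  refine congrArg List.prod (List.map_congr_left fun k hk => ?_)
  rw [List.mem_range] at hk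
  rw [Function.comp_apply, MulAut.conj_apply, ← swap_apply_apply, hσ _ (by omega),
    hσ _ (by omega), Nat.add_assoc]

end PairSwaps

section Example3

variable (n : ℕ)

def deltaCycle : List ℕ :=
  ((List.range' 1 (2 * n - 1)).flatMap fun k => [k, 2 * n + k]) ++ [4 * n]

def example3Beta : Perm (Fin (4 * n + 1)) :=
  swap 0 ((2 * n : ℕ) : Fin (4 * n + 1)) *
    ((deltaCycle n).map (Nat.cast : ℕ → Fin (4 * n + 1))).formPerm

variable {n}

theorem mem_deltaCycle (hn : 0 < n) {a : ℕ} (ha : a ∈ deltaCycle n) : 1 ≤ a ∧ a ≤ 4 * n := by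
  simp only [deltaCycle, List.mem_append, List.mem_flatMap, List.mem_range'_1, List.mem_cons,
    List.not_mem_nil, or_false] at ha
  obtain ⟨k, hk, rfl | rfl⟩ | rfl := ha <;> omega

theorem deltaCycle_nodup : (deltaCycle n).Nodup := by
  refine List.nodup_append.2 ⟨List.nodup_flatMap.2 ⟨?_, ?_⟩, List.nodup_singleton _, ?_⟩
  · intro k hk
    rw [List.mem_range'_1] at hk
    grind
  · refine (List.pairwise_lt_range' 1).imp_of_mem fun {i j} hi hj hij => ?_
    rw [List.mem_range'_1] at hi hj
    grind [List.disjoint_cons_right, List.disjoint_singleton]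
  · grind

theorem pair_infix_deltaCycle {k : ℕ} (h1 : 1 ≤ k) (h2 : k < 2 * n) :
    [k, 2 * n + k] <:+: deltaCycle n := by
  have hk : k ∈ List.range' 1 (2 * n - 1) := List.mem_range'_1.2 ⟨h1, by omega⟩
  have hpair :=
    List.infix_of_mem_flatten (List.mem_map_of_mem (f := fun i => [i, 2 * n + i]) hk)
  exact hpair.trans (List.infix_append [] _ _)

theorem example3Beta_apply_of_lt {k : ℕ} (hk : k < 2 * n) :
    example3Beta n k = ((2 * n + k : ℕ) : Fin (4 * n + 1)) := by
  have hn : 0 < n := by omega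
  have hd : ∀ a ∈ deltaCycle n, a < 4 * n + 1 := fun a ha => by
    have := mem_deltaCycle hn ha; omega
  rw [example3Beta, Perm.mul_apply]
  rcases Nat.eq_zero_or_pos k with rfl | hk0
  · rw [formPerm_map_natCast_apply_of_notMem hd (by omega) fun h => by
      have := mem_deltaCycle hn h; omega]
    simp
  · rw [formPerm_map_natCast_apply deltaCycle_nodup hd (pair_infix_deltaCycle hk0 hk)]
    refine swap_apply_of_ne_of_ne ?_
      ((Fin.natCast_inj_of_lt (by omega) (by omega)).not.2 (by omega))
    rw [Ne, Fin.ext_iff, Fin.val_cast_of_lt (by omega), Fin.val_zero]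
    omega

end Example3

theorem commutator_example3_general (n : ℕ) :
    let α : Perm (Fin (4 * n + 1)) :=
      ((List.range n).map (fun k =>
        Equiv.swap ((2 * k : ℕ) : Fin (4 * n + 1)) ((2 * k + 1 : ℕ) : Fin (4 * n + 1)))).prod
    let γ : Perm (Fin (4 * n + 1)) :=
      Equiv.swap (0 : Fin (4 * n + 1)) ((2 * n : ℕ) : Fin (4 * n + 1))
    let δ : Perm (Fin (4 * n + 1)) :=
      List.formPerm
        (((List.range' 1 (2 * n - 1)).flatMap (fun k =>
            [((k : ℕ) : Fin (4 * n + 1)), ((2 * n + k : ℕ) : Fin (4 * n + 1))])) ++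
          [((4 * n : ℕ) : Fin (4 * n + 1))])
    let β : Perm (Fin (4 * n + 1)) := γ * δ
    α * β * α⁻¹ * β⁻¹ =
      ((List.range (2 * n)).map (fun k =>
        Equiv.swap ((2 * k : ℕ) : Fin (4 * n + 1)) ((2 * k + 1 : ℕ) : Fin (4 * n + 1)))).prod := by
  intro α γ δ β
  have hα : α = pairSwaps (4 * n + 1) n := rfl
  have hβ : β = example3Beta n := by
    simp only [β, γ, δ, example3Beta, deltaCycle, List.map_append, List.map_flatMap,
      List.map_cons, List.map_nil]
  rw [hα, hβ, pairSwaps_inv _ (by omega)]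
  calc pairSwaps _ n * example3Beta n * pairSwaps _ n * (example3Beta n)⁻¹
      = pairSwaps _ n * (example3Beta n * pairSwaps _ n * (example3Beta n)⁻¹) := by group
    _ = pairSwaps _ (n + n) := by
      rw [conj_pairSwaps _ fun _ => example3Beta_apply_of_lt, pairSwaps_add]
    _ = _ := by rw [← two_mul]; rfl

/-- Example 3 of the paper, written 0-indexed on `Fin (4n+1)` (so the paper's point
`i` is our `i - 1`).  For `n ≥ 2` let
`α = (0 1)(2 3)⋯(2n−2 2n−1)` (the paper's `(1 2)(3 4)⋯(2n−1 2n)`),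
`γ = (0 2n)` (the paper's `(1 2n+1)`), and `δ` the cycle through
`1, 2n+1, 2, 2n+2, …, 2n−1, 4n−1, 4n` (the paper's `(2 2n+2 3 2n+3 ⋯ 2n 4n 4n+1)`),
and `β = γδ`.  Then the commutator `[α,β] = αβα⁻¹β⁻¹` equals
`(0 1)(2 3)⋯(4n−2 4n−1)` (the paper's `(1 2)(3 4)⋯(4n−1 4n)`),
a product of `2n` disjoint transpositions. -/
theorem commutator_example3 (n : ℕ) (hn : 2 ≤ n) :
    let α : Perm (Fin (4 * n + 1)) :=
      ((List.range n).map (fun k =>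
        Equiv.swap ((2 * k : ℕ) : Fin (4 * n + 1)) ((2 * k + 1 : ℕ) : Fin (4 * n + 1)))).prod
    let γ : Perm (Fin (4 * n + 1)) :=
      Equiv.swap (0 : Fin (4 * n + 1)) ((2 * n : ℕ) : Fin (4 * n + 1))
    let δ : Perm (Fin (4 * n + 1)) :=
      List.formPerm
        (((List.range' 1 (2 * n - 1)).flatMap (fun k =>
            [((k : ℕ) : Fin (4 * n + 1)), ((2 * n + k : ℕ) : Fin (4 * n + 1))])) ++
          [((4 * n : ℕ) : Fin (4 * n + 1))])
    let β : Perm (Fin (4 * n + 1)) := γ * δ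
    α * β * α⁻¹ * β⁻¹ =
      ((List.range (2 * n)).map (fun k =>
        Equiv.swap ((2 * k : ℕ) : Fin (4 * n + 1)) ((2 * k + 1 : ℕ) : Fin (4 * n + 1)))).prod :=
  commutator_example3_general n
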